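/- arXiv:1409.5614 — 4 statements merged into one kernel-verified Lean document; each statement's English description precedes it below -/
import Mathlib

section
/- Let p and q be distinct primes, k ≥ 1 an integer, and e_1, ..., e_k ∈ {0,1} with e_k = 1. If Φ_{pq}(x)^{e_1} · Φ_{p^2 q}(x)^{e_2} · ... · Φ_{p^k q}(x)^{e_k} = P_T(x) for some numerical semigroup T, then e_i = 1 for all 1 ≤ i ≤ k and T = ⟨p^k, q⟩. -/
open Polynomial
open scoped Classical

/-- A numerical semigroup: a subset of `ℕ` containing `0`, closed under addition,
with finite complement in `ℕ`. -/
structure NumericalSemigroup where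
  carrier : Set ℕ
  zero_mem : 0 ∈ carrier
  add_mem : ∀ ⦃a b : ℕ⦄, a ∈ carrier → b ∈ carrier → a + b ∈ carrier
  finite_compl : Set.Finite carrierᶜ

namespace NumericalSemigroup

/-- The Hilbert series `H_S(x) = Σ_{s ∈ S} x^s`. -/
noncomputable def H (S : NumericalSemigroup) : PowerSeries ℤ :=
  PowerSeries.mk fun n => if n ∈ S.carrier then 1 else 0

/-- The Hilbert series evaluated at `x^w`: `H_S(x^w) = Σ_{s ∈ S} x^{w·s}`. -/
noncomputable def Hexp (S : NumericalSemigroup) (w : ℕ) : PowerSeries ℤ :=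
  PowerSeries.mk fun n => if ∃ s ∈ S.carrier, n = w * s then 1 else 0

/-- The semigroup polynomial `P_S(x) = (1-x)·H_S(x) = 1 + (x-1)·Σ_{s ∉ S} x^s`. -/
noncomputable def P (S : NumericalSemigroup) : Polynomial ℤ :=
  1 + (X - 1) * ∑ s ∈ S.finite_compl.toFinset, X ^ s

/-- The Frobenius number: the largest integer not in `S` (equal to `-1` when `S = ℕ`). -/
noncomputable def Frob (S : NumericalSemigroup) : ℤ :=
  (insert (-1 : ℤ) (S.finite_compl.toFinset.image fun n : ℕ => (n : ℤ))).max'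
    (Finset.insert_nonempty _ _)

/-- The genus: the number of gaps of `S`. -/
noncomputable def genus (S : NumericalSemigroup) : ℕ := S.finite_compl.toFinset.card

/-- `S` viewed as a set of integers. -/
def intSet (S : NumericalSemigroup) : Set ℤ := (fun n : ℕ => (n : ℤ)) '' S.carrier

/-- `S` is cyclotomic if every complex root of `P_S` lies in the closed unit disc. -/
def IsCyclotomicNS (S : NumericalSemigroup) : Prop :=
  ∀ z : ℂ, Polynomial.aeval z S.P = 0 → ‖z‖ ≤ 1

/-- `S` is symmetric if for every integer `z`, `z ∈ S ↔ F(S) - z ∉ S`. -/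
def IsSymmetric (S : NumericalSemigroup) : Prop :=
  ∀ z : ℤ, z ∈ S.intSet ↔ S.Frob - z ∉ S.intSet

/-- The Apéry set of `S` with respect to `m`: elements `s ∈ S` with `s - m ∉ S`
(in particular all `s ∈ S` with `s < m`). -/
def Ap (S : NumericalSemigroup) (m : ℕ) : Set ℕ :=
  {s ∈ S.carrier | ∀ t ∈ S.carrier, t + m ≠ s}

end NumericalSemigroup

/-!
For coprime `a, b` the Apéry set of `⟨a, b⟩` with respect to `a` is `{0, b, …, (a - 1) b}`, so
`H_{⟨a,b⟩} (1 - x^a)(1 - x^b) = 1 - x^{ab}`. Expanding the identity `Φ_q (x - 1) = x^q - 1`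
along `x ↦ x^p` turns this into `Φ_{pq} Φ_{p²q} ⋯ Φ_{p^j q} = P_{⟨p^j, q⟩}`.

If some exponent vanishes, let `j + 1` be the first missing index and `r` the next present one.
Then `H_T = H_{⟨p^j,q⟩} · B` with `B ≡ 1 - x^c (mod x^{2c})` for `c = p^{r-1}`, because
`Φ_{p^i q}(x) = Φ_{pq}(x^{p^{i-1}})` and `Φ_{pq} ≡ 1 - x (mod x²)`. The coefficients below `2c`
then show `p^j ∈ T` but `c ∉ T`, although `c` is a multiple of `p^j`.
-/

noncomputable def indicatorSeries (s : Set ℕ) : PowerSeries ℤ :=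
  PowerSeries.mk fun n => if n ∈ s then 1 else 0

@[simp]
lemma coeff_indicatorSeries (s : Set ℕ) (n : ℕ) :
    PowerSeries.coeff n (indicatorSeries s) = if n ∈ s then 1 else 0 :=
  PowerSeries.coeff_mk _ _

lemma indicatorSeries_injective : Function.Injective indicatorSeries := by
  intro s t h
  ext n
  have hn := congrArg (PowerSeries.coeff n) h
  simp only [coeff_indicatorSeries] at hn
  split_ifs at hn <;> simp_all

lemma indicatorSeries_add_compl (s : Set ℕ) :
    indicatorSeries s + indicatorSeries sᶜ = PowerSeries.mk 1 := by
  ext n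
  by_cases h : n ∈ s <;> simp [h]

lemma indicatorSeries_coe_finset (s : Finset ℕ) :
    indicatorSeries s = ∑ n ∈ s, PowerSeries.X ^ n := by
  ext m
  simp [PowerSeries.coeff_X_pow]

/-- `NumericalSemigroup.Ap S a = S.carrier.apery a`; the set version applies to `⟨a, b⟩` without
first proving that its complement is finite. -/
def Set.apery (s : Set ℕ) (a : ℕ) : Set ℕ :=
  {n ∈ s | ∀ m ∈ s, m + a ≠ n}

lemma indicatorSeries_mul_one_sub_X_pow {s : Set ℕ} {a : ℕ} (hs : ∀ n ∈ s, n + a ∈ s) :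
    indicatorSeries s * (1 - PowerSeries.X ^ a) = indicatorSeries (s.apery a) := by
  ext n
  rw [mul_sub, mul_one, map_sub, PowerSeries.coeff_mul_X_pow']
  have hshift : (∃ m ∈ s, m + a = n) ↔ a ≤ n ∧ n - a ∈ s :=
    ⟨fun ⟨m, hm, hmn⟩ => ⟨by omega, by rwa [← hmn, Nat.add_sub_cancel]⟩,
      fun ⟨han, hn⟩ => ⟨n - a, hn, by omega⟩⟩
  by_cases h : a ≤ n ∧ n - a ∈ s
  · have hn : n ∈ s := by simpa [Nat.sub_add_cancel h.1] using hs _ h.2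
    simp [Set.apery, h.1, h.2, hn, hshift]
  · have hnot : ¬ ∃ m ∈ s, m + a = n := hshift.not.2 h
    by_cases han : a ≤ n <;> simp_all [Set.apery]

lemma one_sub_X_pow_ne_zero {R : Type*} [Ring R] [Nontrivial R] {n : ℕ} (hn : n ≠ 0) :
    (1 - PowerSeries.X ^ n : PowerSeries R) ≠ 0 :=
  fun h => by simpa [hn] using congrArg PowerSeries.constantCoeff h

lemma coeff_mul_coe_of_X_pow_dvd_sub {R : Type*} [CommRing R] {f : PowerSeries R} {B : R[X]}
    {c N : ℕ} (hB : (X ^ (2 * c) : R[X]) ∣ B - (1 - X ^ c)) (hN : N < 2 * c) :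
    PowerSeries.coeff N (f * (B : PowerSeries R)) =
      PowerSeries.coeff N f - if c ≤ N then PowerSeries.coeff (N - c) f else 0 := by
  obtain ⟨G, hG⟩ := hB
  have hf : f * (B : PowerSeries R) =
      f - f * PowerSeries.X ^ c + f * (G : PowerSeries R) * PowerSeries.X ^ (2 * c) := by
    rw [sub_eq_iff_eq_add'.1 hG]
    push_cast
    ring
  rw [hf, map_add, map_sub, PowerSeries.coeff_mul_X_pow', PowerSeries.coeff_mul_X_pow',
    if_neg hN.not_ge, add_zero]

namespace NumericalSemigroup

def toAddSubmonoid (S : NumericalSemigroup) : AddSubmonoid ℕ where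
  carrier := S.carrier
  add_mem' := fun ha hb => S.add_mem ha hb
  zero_mem' := S.zero_mem

lemma coe_P (S : NumericalSemigroup) :
    (S.P : PowerSeries ℤ) = (1 - PowerSeries.X) * indicatorSeries S.carrier := by
  have hcompl : indicatorSeries S.carrierᶜ =
      ((∑ s ∈ S.finite_compl.toFinset, X ^ s : ℤ[X]) : PowerSeries ℤ) := by
    conv_lhs => rw [← S.finite_compl.coe_toFinset]
    rw [indicatorSeries_coe_finset, ← Polynomial.coeToPowerSeries.ringHom_apply, map_sum]
    simp
  rw [P, Polynomial.coe_add, Polynomial.coe_mul, ← hcompl, Polynomial.coe_one,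
    Polynomial.coe_sub, Polynomial.coe_X, Polynomial.coe_one,
    eq_sub_of_add_eq' (indicatorSeries_add_compl S.carrier)]
  linear_combination -(PowerSeries.mk_one_mul_one_sub_eq_one ℤ)

end NumericalSemigroup

lemma apery_closure_pair {a b : ℕ} (hab : a.Coprime b) (hb : 0 < b) :
    (AddSubmonoid.closure ({a, b} : Set ℕ) : Set ℕ).apery a =
      ↑((Finset.range a).image (· * b)) := by
  ext n
  simp only [Set.apery, SetLike.mem_coe, AddSubmonoid.mem_closure_pair, smul_eq_mul,
    Finset.coe_image, Finset.coe_range, Set.mem_image, Set.mem_Iio]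
  constructor
  · rintro ⟨⟨α, β, rfl⟩, hn⟩
    obtain rfl : α = 0 := by
      obtain _ | α := α
      · rfl
      · exact absurd (by ring) (hn _ ⟨α, β, rfl⟩)
    refine ⟨β, lt_of_not_ge fun hβ => ?_, by ring⟩
    obtain ⟨γ, rfl⟩ := Nat.exists_eq_add_of_le hβ
    obtain ⟨b, rfl⟩ := Nat.exists_eq_add_of_lt hb
    exact hn _ ⟨b, γ, rfl⟩ (by ring)
  · rintro ⟨β, hβ, rfl⟩
    refine ⟨⟨0, β, by ring⟩, ?_⟩
    rintro m ⟨α, β', rfl⟩ h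
    have hβ' : β' < β := by
      by_contra! hle
      nlinarith [Nat.mul_le_mul_right b hle]
    obtain ⟨δ, rfl⟩ := Nat.exists_eq_add_of_lt hβ'
    have hδ : (α + 1) * a = (δ + 1) * b := by linarith
    have ha_dvd : a ∣ δ + 1 := hab.dvd_of_dvd_mul_right ⟨α + 1, by linarith⟩
    exact absurd (Nat.le_of_dvd (by omega) ha_dvd) (by omega)

lemma indicatorSeries_closure_pair_mul {a b : ℕ} (hab : a.Coprime b) (hb : 0 < b) :
    indicatorSeries (AddSubmonoid.closure ({a, b} : Set ℕ)) *
        ((1 - PowerSeries.X ^ a) * (1 - PowerSeries.X ^ b)) = 1 - PowerSeries.X ^ (a * b) := by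
  have hclosed : ∀ n ∈ (AddSubmonoid.closure ({a, b} : Set ℕ) : Set ℕ),
      n + a ∈ (AddSubmonoid.closure ({a, b} : Set ℕ) : Set ℕ) :=
    fun n hn => add_mem hn (AddSubmonoid.subset_closure (by simp))
  rw [← mul_assoc, indicatorSeries_mul_one_sub_X_pow hclosed,
    apery_closure_pair hab hb, indicatorSeries_coe_finset,
    Finset.sum_image fun _ _ _ _ h => Nat.eq_of_mul_eq_mul_right hb h]
  simp_rw [pow_mul']
  rw [geom_sum_mul_neg, ← pow_mul, mul_comm]

lemma cyclotomic_prime_pow_mul_eq_expand {p n : ℕ} (hp : p.Prime) (hn : p ∣ n) (R : Type*)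
    [CommRing R] (i : ℕ) : cyclotomic (p ^ i * n) R = expand R (p ^ i) (cyclotomic n R) := by
  induction i with
  | zero => simp
  | succ i ih =>
    rw [pow_succ', expand_mul, ← ih, cyclotomic_expand_eq_cyclotomic hp (dvd_mul_of_dvd_right hn _)]
    ring_nf

section TwoPrimes

variable {p q : ℕ}

lemma expand_prod_range_cyclotomic (hp : p.Prime) (hpq : ¬ p ∣ q) (j : ℕ) :
    expand ℤ p (∏ i ∈ Finset.range (j + 1), cyclotomic (p ^ i * q) ℤ) =
      ∏ i ∈ Finset.range (j + 2), cyclotomic (p ^ i * q) ℤ := by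
  rw [map_prod, Finset.prod_range_succ', Finset.prod_range_succ' _ (j + 1),
    Finset.prod_range_succ']
  simp only [pow_zero, one_mul, cyclotomic_expand_eq_cyclotomic_mul hp hpq,
    cyclotomic_expand_eq_cyclotomic hp
      (dvd_mul_of_dvd_left (dvd_pow_self p (Nat.succ_ne_zero _)) q),
    mul_right_comm _ q p, ← pow_succ]
  simp only [zero_add, pow_one, mul_comm q p, mul_assoc]

lemma prod_range_cyclotomic_mul_X_pow_sub_one (hp : p.Prime) (hq : q.Prime) (hpq : p ≠ q)
    (j : ℕ) : (∏ i ∈ Finset.range (j + 1), cyclotomic (p ^ i * q) ℤ) * (X ^ p ^ j - 1) =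
      X ^ (p ^ j * q) - 1 := by
  induction j with
  | zero =>
    have := Fact.mk hq
    simpa using cyclotomic_prime_mul_X_sub_one ℤ q
  | succ j ih =>
    have h := congrArg (expand ℤ p) ih
    rwa [map_mul, expand_prod_range_cyclotomic hp ((Nat.prime_dvd_prime_iff_eq hp hq).not.2 hpq),
      map_sub, map_sub, map_pow, map_pow, expand_X, map_one, ← pow_mul, ← pow_mul, ← pow_succ',
      ← mul_assoc, ← pow_succ'] at h

lemma prod_Icc_cyclotomic_mul (hp : p.Prime) (hq : q.Prime) (hpq : p ≠ q) (j : ℕ) :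
    (∏ i ∈ Finset.Icc 1 j, cyclotomic (p ^ i * q) ℤ) * ((X ^ p ^ j - 1) * (X ^ q - 1)) =
      (X ^ (p ^ j * q) - 1) * (X - 1) := by
  have := Fact.mk hq
  have hIcc : ∏ i ∈ Finset.Icc 1 j, cyclotomic (p ^ i * q) ℤ =
      ∏ i ∈ Finset.range j, cyclotomic (p ^ (i + 1) * q) ℤ := by
    rw [Finset.range_eq_Ico, Finset.prod_Ico_add' (fun i => cyclotomic (p ^ i * q) ℤ)]
    rfl
  rw [← prod_range_cyclotomic_mul_X_pow_sub_one hp hq hpq j, Finset.prod_range_succ', hIcc,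
    ← cyclotomic_prime_mul_X_sub_one ℤ q, pow_zero, one_mul]
  ring

lemma coe_prod_Icc_cyclotomic (hp : p.Prime) (hq : q.Prime) (hpq : p ≠ q) (j : ℕ) :
    ((∏ i ∈ Finset.Icc 1 j, cyclotomic (p ^ i * q) ℤ : ℤ[X]) : PowerSeries ℤ) =
      (1 - PowerSeries.X) * indicatorSeries (AddSubmonoid.closure ({p ^ j, q} : Set ℕ)) := by
  have hpj : p ^ j ≠ 0 := pow_ne_zero j hp.ne_zero
  have hpoly := congrArg (fun f : ℤ[X] => (f : PowerSeries ℤ)) (prod_Icc_cyclotomic_mul hp hq hpq j)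
  simp only [Polynomial.coe_mul, Polynomial.coe_sub, Polynomial.coe_pow, Polynomial.coe_X,
    Polynomial.coe_one] at hpoly
  have hsemigroup := indicatorSeries_closure_pair_mul
    (Nat.Coprime.pow_left j ((Nat.coprime_primes hp hq).2 hpq)) hq.pos
  refine mul_right_cancel₀ (mul_ne_zero (one_sub_X_pow_ne_zero hpj)
    (one_sub_X_pow_ne_zero hq.ne_zero)) ?_
  linear_combination hpoly - (1 - PowerSeries.X) * hsemigroup

lemma X_sq_dvd_cyclotomic_mul_sub (hp : p.Prime) (hq : q.Prime) (hpq : p ≠ q) :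
    (X ^ 2 : ℤ[X]) ∣ cyclotomic (p * q) ℤ - (1 - X) := by
  set π := Ideal.Quotient.mk (Ideal.span {(X ^ 2 : ℤ[X])})
  have hX : ∀ n, 2 ≤ n → π (X ^ n) = 0 := fun n hn =>
    Ideal.Quotient.eq_zero_iff_mem.2 (Ideal.mem_span_singleton.2 (pow_dvd_pow X hn))
  have h := congrArg π (prod_Icc_cyclotomic_mul hp hq hpq 1)
  simp only [Finset.Icc_self, Finset.prod_singleton, pow_one, map_mul, map_sub, map_one,
    hX p hp.two_le, hX q hq.two_le, hX (p * q) (by nlinarith [hp.two_le, hq.two_le])] at h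
  rw [← Ideal.mem_span_singleton, ← Ideal.Quotient.eq, map_sub, map_one]
  linear_combination h

lemma X_pow_dvd_cyclotomic_prime_pow_mul_sub (hp : p.Prime) (hq : q.Prime) (hpq : p ≠ q)
    (s : ℕ) : (X ^ (2 * p ^ s) : ℤ[X]) ∣ cyclotomic (p ^ (s + 1) * q) ℤ - (1 - X ^ p ^ s) := by
  have h := map_dvd (expand ℤ (p ^ s)) (X_sq_dvd_cyclotomic_mul_sub hp hq hpq)
  rwa [map_sub, map_sub, map_one, map_pow, expand_X, ← pow_mul, mul_comm (p ^ s) 2,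
    ← cyclotomic_prime_pow_mul_eq_expand hp (dvd_mul_right p q), ← mul_assoc, ← pow_succ] at h

lemma X_pow_dvd_prod_cyclotomic_sub (hp : p.Prime) (hq : q.Prime) (hpq : p ≠ q)
    {J : Finset ℕ} {s : ℕ} (hs : s + 1 ∈ J) (hJ : ∀ i ∈ J, s + 1 ≤ i) :
    (X ^ (2 * p ^ s) : ℤ[X]) ∣ ∏ i ∈ J, cyclotomic (p ^ i * q) ℤ - (1 - X ^ p ^ s) := by
  set π := Ideal.Quotient.mk (Ideal.span {(X ^ (2 * p ^ s) : ℤ[X])})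
  have hmod : ∀ t, s ≤ t → π (cyclotomic (p ^ (t + 1) * q) ℤ) = π (1 - X ^ p ^ t) := by
    intro t hst
    rw [Ideal.Quotient.eq, Ideal.mem_span_singleton]
    exact (pow_dvd_pow X (by gcongr; exact hp.one_le)).trans
      (X_pow_dvd_cyclotomic_prime_pow_mul_sub hp hq hpq t)
  have hhigh : ∀ i ∈ J.erase (s + 1), π (cyclotomic (p ^ i * q) ℤ) = 1 := by
    intro i hi
    obtain ⟨hne, hiJ⟩ := Finset.mem_erase.1 hi
    obtain ⟨t, rfl⟩ : ∃ t, i = t + 1 := ⟨i - 1, by grind⟩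
    have hst : s < t := by grind
    have hX : π (X ^ p ^ t) = 0 := by
      refine Ideal.Quotient.eq_zero_iff_mem.2 (Ideal.mem_span_singleton.2 (pow_dvd_pow X ?_))
      calc 2 * p ^ s ≤ p * p ^ s := by gcongr; exact hp.two_le
        _ = p ^ (s + 1) := (pow_succ' p s).symm
        _ ≤ p ^ t := Nat.pow_le_pow_right hp.pos hst
    rw [hmod t hst.le, map_sub, map_one, hX, sub_zero]
  rw [← Ideal.mem_span_singleton, ← Ideal.Quotient.eq, ← Finset.mul_prod_erase J _ hs, map_mul,
    map_prod, Finset.prod_congr rfl hhigh, Finset.prod_const_one, mul_one, hmod s le_rfl]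

lemma indicatorSeries_ne_mul_prod_cyclotomic (hp : p.Prime) (hq : q.Prime) (hpq : p ≠ q)
    (T : AddSubmonoid ℕ) {J : Finset ℕ} {j s : ℕ} (hs : s + 1 ∈ J) (hJ : ∀ i ∈ J, s + 1 ≤ i)
    (hjs : j < s) :
    indicatorSeries T ≠ indicatorSeries (AddSubmonoid.closure ({p ^ j, q} : Set ℕ)) *
      ↑(∏ i ∈ J, cyclotomic (p ^ i * q) ℤ) := by
  intro h
  set S := AddSubmonoid.closure ({p ^ j, q} : Set ℕ)
  have hcoeff : ∀ N < 2 * p ^ s, (if N ∈ T then 1 else 0 : ℤ) = (if N ∈ S then 1 else 0) -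
      if p ^ s ≤ N then (if N - p ^ s ∈ S then 1 else 0) else 0 := by
    intro N hN
    have h' := congrArg (PowerSeries.coeff N) h
    rwa [coeff_mul_coe_of_X_pow_dvd_sub (X_pow_dvd_prod_cyclotomic_sub hp hq hpq hs hJ) hN,
      coeff_indicatorSeries, coeff_indicatorSeries, coeff_indicatorSeries] at h'
  have hlt : p ^ j < p ^ s := Nat.pow_lt_pow_right hp.one_lt hjs
  have hmul : p ^ s = p ^ (s - j) • p ^ j := by
    rw [smul_eq_mul, ← pow_add, Nat.sub_add_cancel hjs.le]
  have hpjS : p ^ j ∈ S := AddSubmonoid.subset_closure (by simp)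
  have hpjT : p ^ j ∈ T := by
    have h' := hcoeff (p ^ j) (by omega)
    simp only [hpjS, if_true, hlt.not_ge, if_false, sub_zero] at h'
    by_contra hn
    simp [hn] at h'
  have hcT : p ^ s ∉ T := by
    have h' := hcoeff (p ^ s) (by have := pow_pos hp.pos s; omega)
    intro hn
    simp [hn, hmul ▸ nsmul_mem hpjS _, zero_mem] at h'
  exact hcT (hmul ▸ nsmul_mem hpjT _)

end TwoPrimes

lemma Finset.exists_Icc_one_subset_and_add_one_notMem (I : Finset ℕ) :
    ∃ j, Finset.Icc 1 j ⊆ I ∧ j + 1 ∉ I := by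
  have hex : ∃ n, n + 1 ∉ I :=
    ⟨I.sup id, fun h => Nat.not_succ_le_self _ (Finset.le_sup (f := id) h)⟩
  refine ⟨Nat.find hex, fun i hi => ?_, Nat.find_spec hex⟩
  rw [Finset.mem_Icc] at hi
  simpa [Nat.sub_add_cancel hi.1] using Nat.find_min hex (m := i - 1) (by omega)

namespace NumericalSemigroup

lemma exists_eq_Icc_of_prod_cyclotomic_eq_P {p q : ℕ} (hp : p.Prime) (hq : q.Prime)
    (hpq : p ≠ q) {I : Finset ℕ} (hI : ∀ i ∈ I, 1 ≤ i) (T : NumericalSemigroup)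
    (h : ∏ i ∈ I, cyclotomic (p ^ i * q) ℤ = T.P) :
    ∃ j, I = Finset.Icc 1 j ∧ T.carrier = AddSubmonoid.closure ({p ^ j, q} : Set ℕ) := by
  obtain ⟨j, hsub, hj⟩ := I.exists_Icc_one_subset_and_add_one_notMem
  set J := I \ Finset.Icc 1 j
  have hser : indicatorSeries T.toAddSubmonoid =
      indicatorSeries (AddSubmonoid.closure ({p ^ j, q} : Set ℕ)) *
        ↑(∏ i ∈ J, cyclotomic (p ^ i * q) ℤ) := by
    refine mul_left_cancel₀ (by simpa using one_sub_X_pow_ne_zero (R := ℤ) one_ne_zero) ?_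
    calc (1 - PowerSeries.X) * indicatorSeries T.toAddSubmonoid = (T.P : PowerSeries ℤ) :=
          T.coe_P.symm
      _ = _ := by
        rw [← h, ← Finset.prod_sdiff hsub, mul_comm, Polynomial.coe_mul,
          coe_prod_Icc_cyclotomic hp hq hpq, mul_assoc]
  have hJ : J = ∅ := by
    by_contra hne
    set r := J.min' (Finset.nonempty_iff_ne_empty.2 hne)
    have hr : r ∈ J := Finset.min'_mem _ _
    obtain ⟨hrI, hrj⟩ := Finset.mem_sdiff.1 hr
    obtain ⟨s, hs⟩ : ∃ s, r = s + 1 := ⟨r - 1, by grind [hI r hrI]⟩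
    refine indicatorSeries_ne_mul_prod_cyclotomic hp hq hpq T.toAddSubmonoid (hs ▸ hr)
      (fun i hi => hs ▸ J.min'_le i hi) ?_ hser
    grind
  refine ⟨j, (Finset.sdiff_eq_empty_iff_subset.1 hJ).antisymm hsub, ?_⟩
  rw [hJ, Finset.prod_empty, Polynomial.coe_one, mul_one] at hser
  exact indicatorSeries_injective hser

end NumericalSemigroup

open NumericalSemigroup in
/-- Let `p ≠ q` be primes, `k ≥ 1`, and `e_1, …, e_k ∈ {0,1}` with `e_k = 1`. If
`Φ_{pq}^{e_1}·Φ_{p²q}^{e_2}·⋯·Φ_{p^k q}^{e_k} = P_T` for a numerical semigroup `T`, then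
`e_i = 1` for all `1 ≤ i ≤ k` and `T = ⟨p^k, q⟩`. -/
theorem cyclotomic_product_eq_semigroupPolynomial (p q : ℕ) (hp : p.Prime) (hq : q.Prime)
    (hpq : p ≠ q) (k : ℕ) (hk : 1 ≤ k) (e : ℕ → ℕ)
    (he : ∀ i, 1 ≤ i → i ≤ k → e i ≤ 1) (hek : e k = 1) (T : NumericalSemigroup)
    (h : ∏ i ∈ Finset.Icc 1 k, Polynomial.cyclotomic (p ^ i * q) ℤ ^ e i = T.P) :
    (∀ i, 1 ≤ i → i ≤ k → e i = 1) ∧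
    T.carrier = ↑(AddSubmonoid.closure ({p ^ k, q} : Set ℕ)) := by
  have hprod : ∏ i ∈ Finset.Icc 1 k with e i = 1, cyclotomic (p ^ i * q) ℤ = T.P := by
    rw [Finset.prod_filter, ← h]
    refine Finset.prod_congr rfl fun i hi => ?_
    rw [Finset.mem_Icc] at hi
    rcases Nat.le_one_iff_eq_zero_or_eq_one.1 (he i hi.1 hi.2) with h0 | h1 <;> simp [*]
  obtain ⟨j, hIj, hT⟩ := exists_eq_Icc_of_prod_cyclotomic_eq_P hp hq hpq
    (fun i hi => (Finset.mem_Icc.1 (Finset.mem_filter.1 hi).1).1) T hprod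
  have hmem : ∀ i, i ∈ Finset.Icc 1 j ↔ (1 ≤ i ∧ i ≤ k) ∧ e i = 1 := fun i => by
    rw [← hIj, Finset.mem_filter, Finset.mem_Icc]
  have hkj : k ≤ j := (Finset.mem_Icc.1 ((hmem k).2 ⟨⟨hk, le_rfl⟩, hek⟩)).2
  have hjk : j ≤ k := ((hmem j).1 (Finset.mem_Icc.2 ⟨hk.trans hkj, le_rfl⟩)).1.2
  obtain rfl : j = k := le_antisymm hjk hkj
  exact ⟨fun i hi1 hik => ((hmem i).1 (Finset.mem_Icc.2 ⟨hi1, hik⟩)).2, hT⟩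
end

section
/- Let p and q be distinct primes and m, n positive integers. Every element t of T = ⟨p^m, q^n⟩ can be written in a unique way as t = α·p^m + β·q^n + s·p^{m−1}q^{n−1} with integers 0 ≤ α ≤ q^{n−1} − 1, 0 ≤ β ≤ p^{m−1} − 1, and s ∈ ⟨p, q⟩. -/
open Polynomial
open scoped Classical

/-!
Write `P = p^{m-1}`, `Q = q^{n-1}`, so that `T = ⟨p P, q Q⟩`. For existence, take
`t = a·pP + b·qQ` and divide with remainder: `a = d Q + α`, `b = e P + β`; then
`t = α·pP + β·qQ + (d p + e q)·PQ`. For uniqueness, reduce modulo `Q`: `t ≡ α·pP`, and `pP` is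
a unit mod `Q`, so `α < Q` is determined by `t`; symmetrically `β`, and then `s`.
-/

theorem Nat.eq_of_mul_modEq_mul_of_coprime {k r a b : ℕ} (hrk : r.Coprime k) (ha : a < k)
    (hb : b < k) (h : a * r ≡ b * r [MOD k]) : a = b :=
  (h.cancel_right_of_coprime hrk.symm).eq_of_lt_of_lt ha hb

section Decomposition

variable {p q P Q : ℕ}

theorem decomp_modEq (α β s : ℕ) :
    α * (p * P) + β * (q * Q) + s * (P * Q) ≡ α * (p * P) [MOD Q] := by
  have hsplit : α * (p * P) + β * (q * Q) + s * (P * Q) = α * (p * P) + Q * (β * q + s * P) := by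
    ring
  rw [Nat.ModEq, hsplit, Nat.add_mul_mod_self_left]

theorem exists_decomp_of_mem_closure_pair {t : ℕ} (hP : 0 < P) (hQ : 0 < Q)
    (ht : t ∈ AddSubmonoid.closure ({p * P, q * Q} : Set ℕ)) :
    ∃ α β s, α < Q ∧ β < P ∧ s ∈ AddSubmonoid.closure ({p, q} : Set ℕ) ∧
      t = α * (p * P) + β * (q * Q) + s * (P * Q) := by
  obtain ⟨a, b, rfl⟩ := (AddSubmonoid.mem_closure_pair _ _ _).mp ht
  refine ⟨a % Q, b % P, a / Q * p + b / P * q, Nat.mod_lt _ hQ, Nat.mod_lt _ hP,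
    (AddSubmonoid.mem_closure_pair _ _ _).mpr ⟨a / Q, b / P, by simp only [smul_eq_mul]⟩, ?_⟩
  conv_lhs => rw [← Nat.div_add_mod a Q, ← Nat.div_add_mod b P]
  simp only [smul_eq_mul]
  ring

theorem decomp_injective {α β s α' β' s' : ℕ} (hP : 0 < P) (hQ : 0 < Q)
    (hpQ : (p * P).Coprime Q) (hqP : (q * Q).Coprime P)
    (hα : α < Q) (hα' : α' < Q) (hβ : β < P) (hβ' : β' < P)
    (h : α * (p * P) + β * (q * Q) + s * (P * Q) = α' * (p * P) + β' * (q * Q) + s' * (P * Q)) :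
    α = α' ∧ β = β' ∧ s = s' := by
  have hαα' : α = α' := Nat.eq_of_mul_modEq_mul_of_coprime hpQ hα hα' <|
    (decomp_modEq α β s).symm.trans (h ▸ decomp_modEq α' β' s')
  have hswap : ∀ a b c : ℕ,
      a * (p * P) + b * (q * Q) + c * (P * Q) = b * (q * Q) + a * (p * P) + c * (Q * P) := by
    intros; ring
  rw [hswap, hswap] at h
  have hββ' : β = β' := Nat.eq_of_mul_modEq_mul_of_coprime hqP hβ hβ' <|
    (decomp_modEq β α s).symm.trans (h ▸ decomp_modEq β' α' s')
  subst hαα' hββ'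
  exact ⟨rfl, rfl, Nat.eq_of_mul_eq_mul_right (Nat.mul_pos hQ hP) (Nat.add_left_cancel h)⟩

end Decomposition

open NumericalSemigroup in
/-- For distinct primes `p, q` and positive `m, n`: every element `t` of
`T = ⟨p^m, q^n⟩` can be written in a unique way as
`t = α·p^m + β·q^n + s·p^{m-1}·q^{n-1}` with `0 ≤ α ≤ q^{n-1} - 1`,
`0 ≤ β ≤ p^{m-1} - 1` and `s ∈ ⟨p, q⟩`. -/
theorem unique_decomposition_powers (p q : ℕ) (hp : p.Prime) (hq : q.Prime) (hpq : p ≠ q)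
    (m n : ℕ) (hm : 0 < m) (hn : 0 < n) (T : NumericalSemigroup)
    (hT : T.carrier = ↑(AddSubmonoid.closure ({p ^ m, q ^ n} : Set ℕ))) :
    ∀ t ∈ T.carrier, ∃! x : ℕ × ℕ × ℕ,
      x.1 ≤ q ^ (n - 1) - 1 ∧ x.2.1 ≤ p ^ (m - 1) - 1 ∧
      x.2.2 ∈ (AddSubmonoid.closure ({p, q} : Set ℕ) : Set ℕ) ∧
      t = x.1 * p ^ m + x.2.1 * q ^ n + x.2.2 * (p ^ (m - 1) * q ^ (n - 1)) := by
  have hcop : p.Coprime q := (Nat.coprime_primes hp hq).mpr hpq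
  have hP : 0 < p ^ (m - 1) := pow_pos hp.pos _
  have hQ : 0 < q ^ (n - 1) := pow_pos hq.pos _
  rw [← mul_pow_sub_one hm.ne' p, ← mul_pow_sub_one hn.ne' q] at hT ⊢
  have hpQ : (p * p ^ (m - 1)).Coprime (q ^ (n - 1)) := by
    rw [mul_pow_sub_one hm.ne']; exact hcop.pow _ _
  have hqP : (q * q ^ (n - 1)).Coprime (p ^ (m - 1)) := by
    rw [mul_pow_sub_one hn.ne']; exact hcop.symm.pow _ _
  intro t ht
  rw [hT] at ht
  obtain ⟨α, β, s, hα, hβ, hs, rfl⟩ := exists_decomp_of_mem_closure_pair hP hQ ht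
  refine ⟨(α, β, s), ⟨Nat.le_sub_one_of_lt hα, Nat.le_sub_one_of_lt hβ, hs, rfl⟩, ?_⟩
  rintro ⟨α', β', s'⟩ ⟨hα', hβ', -, h⟩
  obtain ⟨rfl, rfl, rfl⟩ :=
    decomp_injective hP hQ hpQ hqP hα (by omega) hβ (by omega) h
  rfl
end

section
/- Suppose S and T are numerical semigroups, w ≥ 1 an integer, and f a polynomial with nonnegative integer coefficients such that H_S(x^w)·f(x) = H_T(x) as formal power series. Then P_S(x^w) divides P_T(x) in ℤ[x], and the quotient Q(x) = P_T(x)/P_S(x^w) is a monic polynomial with Q(0) = 1 whose nonzero coefficients, read in order of increasing degree, alternate between +1 and −1, beginning with +1. -/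
open Polynomial
open scoped Classical

/-- The nonzero coefficients of `Q`, read in order of increasing degree, alternate
between `+1` and `-1`: each coefficient is `0`, `1` or `-1`, and any two consecutive
nonzero coefficients have opposite signs. -/
def AlternatingCoeffs (Q : Polynomial ℤ) : Prop :=
  (∀ i, Q.coeff i = 0 ∨ Q.coeff i = 1 ∨ Q.coeff i = -1) ∧
  ∀ i j, i < j → Q.coeff i ≠ 0 → Q.coeff j ≠ 0 →
    (∀ k, i < k → k < j → Q.coeff k = 0) → Q.coeff j = -Q.coeff i

/-!
Since `P_S(x^w) = (1 - x^w) H_S(x^w)`, the hypothesis gives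
`P_T = (1 - x) H_T = P_S(x^w) · (1 - x) D` with `D = f / (1 - x^w)`. As `f ≥ 0`, the
coefficients of `D` are nonnegative and nondecreasing along steps of `w`; and
`D - H_T = f(x) · Σ_{s ∉ S} x^{ws}` is a polynomial, so they are eventually `1`. Hence `D` is a
`0/1` series with `D(0) = 1`, and `Q = (1 - x) D` is a polynomial whose coefficients are the
successive differences of a `0/1` sequence that starts at `0` and ends at `1`: they alternate,
and the first and last nonzero ones are `+1`.
-/

open Filter

open PowerSeries hiding X coeff_coe coeff_X_pow_mul'

theorem Polynomial.coe_expand_eq_expand {R : Type*} [CommRing R] {p : ℕ} (hp : p ≠ 0)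
    (f : R[X]) : ((expand R p f : R[X]) : R⟦X⟧) = PowerSeries.expand p hp f := by
  ext n
  rw [Polynomial.coeff_coe, Polynomial.coeff_expand (Nat.pos_of_ne_zero hp),
    PowerSeries.coeff_expand]
  simp only [Polynomial.coeff_coe]

namespace PowerSeries

variable {R : Type*}

theorem coe_trunc_of_coeff_eq_zero [CommSemiring R] {φ : R⟦X⟧} {N : ℕ}
    (h : ∀ n, N ≤ n → coeff n φ = 0) : (trunc N φ : R⟦X⟧) = φ := by
  ext n
  rw [Polynomial.coeff_coe, coeff_trunc]
  split_ifs with hn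
  · rfl
  · exact (h n (not_lt.mp hn)).symm

section OneSubXPow

variable [CommRing R] {w : ℕ} {φ ψ : R⟦X⟧}

theorem coeff_eq_add_of_one_sub_X_pow_mul_eq (h : (1 - PowerSeries.X ^ w) * φ = ψ) (n : ℕ) :
    coeff n φ = coeff n ψ + if w ≤ n then coeff (n - w) φ else 0 := by
  rw [← h, sub_mul, one_mul, map_sub, PowerSeries.coeff_X_pow_mul', sub_add_cancel]

variable [PartialOrder R] [IsOrderedAddMonoid R]

theorem coeff_nonneg_of_one_sub_X_pow_mul_eq (hw : w ≠ 0)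
    (h : (1 - PowerSeries.X ^ w) * φ = ψ) (hψ : ∀ n, 0 ≤ coeff n ψ) (n : ℕ) :
    0 ≤ coeff n φ := by
  induction n using Nat.strong_induction_on with
  | _ n ih =>
    rw [coeff_eq_add_of_one_sub_X_pow_mul_eq h]
    split_ifs with hn
    · exact add_nonneg (hψ n) (ih _ (Nat.sub_lt (by omega) (Nat.pos_of_ne_zero hw)))
    · simpa using hψ n

theorem coeff_le_coeff_add_mul_of_one_sub_X_pow_mul_eq (h : (1 - PowerSeries.X ^ w) * φ = ψ)
    (hψ : ∀ n, 0 ≤ coeff n ψ) (n m : ℕ) : coeff n φ ≤ coeff (n + w * m) φ := by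
  induction m with
  | zero => simp
  | succ m ih =>
    refine ih.trans ?_
    rw [coeff_eq_add_of_one_sub_X_pow_mul_eq h (n + w * (m + 1)), if_pos (by nlinarith),
      show n + w * (m + 1) - w = n + w * m by rw [Nat.mul_succ, ← add_assoc, Nat.add_sub_cancel]]
    exact le_add_of_nonneg_left (hψ _)

end OneSubXPow

theorem coeff_eq_zero_or_one_of_one_sub_X_pow_mul_eq {w : ℕ} (hw : w ≠ 0) {φ ψ : ℤ⟦X⟧}
    (h : (1 - PowerSeries.X ^ w) * φ = ψ) (hψ : ∀ n, 0 ≤ coeff n ψ)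
    (hφ : ∀ᶠ n in atTop, coeff n φ = 1) (n : ℕ) : coeff n φ = 0 ∨ coeff n φ = 1 := by
  obtain ⟨N, hN⟩ := eventually_atTop.mp hφ
  have hle := coeff_le_coeff_add_mul_of_one_sub_X_pow_mul_eq h hψ n N
  rw [hN _ (Nat.le_add_left_of_le (Nat.le_mul_of_pos_left N (Nat.pos_of_ne_zero hw)))] at hle
  have := coeff_nonneg_of_one_sub_X_pow_mul_eq hw h hψ n
  omega

end PowerSeries

section DifferenceCoeffs

variable {d : ℕ → ℤ} {Q : ℤ[X]}

theorem eq_of_coeff_eq_zero_of_coeff_eq_sub (hQ : ∀ n, Q.coeff n = d (n + 1) - d n) {a b : ℕ}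
    (hab : a ≤ b) (h : ∀ k, a ≤ k → k < b → Q.coeff k = 0) : d b = d a := by
  induction b, hab using Nat.le_induction with
  | base => rfl
  | succ b hab ih =>
    have := hQ b
    rw [h b hab b.lt_succ_self] at this
    rw [← ih fun k hk hkb => h k hk (by omega)]
    omega

theorem alternatingCoeffs_of_coeff_eq_sub (hd : ∀ n, d n = 0 ∨ d n = 1)
    (hQ : ∀ n, Q.coeff n = d (n + 1) - d n) : AlternatingCoeffs Q := by
  refine ⟨fun i => ?_, fun i j hij hi hj hzero => ?_⟩
  · rw [hQ]; rcases hd i with h | h <;> rcases hd (i + 1) with h' | h' <;> omega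
  · have hconst : d j = d (i + 1) :=
      eq_of_coeff_eq_zero_of_coeff_eq_sub hQ hij hzero
    simp only [hQ] at hi hj ⊢
    rcases hd i with h | h <;> rcases hd (i + 1) with h' | h' <;>
      rcases hd (j + 1) with h'' | h'' <;> omega

theorem monic_of_coeff_eq_sub (hd : ∀ n, d n = 0 ∨ d n = 1) (hd0 : d 0 = 0)
    (hd1 : ∀ᶠ n in atTop, d n = 1) (hQ : ∀ n, Q.coeff n = d (n + 1) - d n) : Q.Monic := by
  obtain ⟨N, hN⟩ := eventually_atTop.mp hd1
  have hdeg : d (Q.natDegree + 1) = 1 := by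
    rw [← hN (max N (Q.natDegree + 1)) (le_max_left _ _)]
    refine (eq_of_coeff_eq_zero_of_coeff_eq_sub hQ (le_max_right _ _) fun k hk _ => ?_).symm
    exact coeff_eq_zero_of_natDegree_lt hk
  have hQ0 : Q ≠ 0 := by
    rintro rfl
    have := eq_of_coeff_eq_zero_of_coeff_eq_sub hQ (Nat.zero_le N) fun k _ _ => coeff_zero k
    rw [hN N le_rfl, hd0] at this
    exact one_ne_zero this
  have hlc : Q.coeff Q.natDegree ≠ 0 := leadingCoeff_ne_zero.mpr hQ0
  show Q.coeff Q.natDegree = 1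
  rw [hQ] at hlc ⊢
  rcases hd Q.natDegree with h | h <;> omega

end DifferenceCoeffs

theorem PowerSeries.exists_monic_alternatingCoeffs_eq_one_sub_X_mul {φ : ℤ⟦X⟧}
    (hφ : ∀ n, coeff n φ = 0 ∨ coeff n φ = 1) (hφ0 : coeff 0 φ = 1)
    (hφ1 : ∀ᶠ n in atTop, coeff n φ = 1) :
    ∃ Q : ℤ[X], (Q : ℤ⟦X⟧) = (1 - PowerSeries.X) * φ ∧ Q.Monic ∧ Q.coeff 0 = 1 ∧
      AlternatingCoeffs Q := by
  set d : ℕ → ℤ := fun n => coeff n (PowerSeries.X * φ)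
  have hd_succ (n : ℕ) : d (n + 1) = coeff n φ := coeff_succ_X_mul n φ
  have hd0 : d 0 = 0 := coeff_zero_X_mul φ
  have hd (n : ℕ) : d n = 0 ∨ d n = 1 := by
    cases n with
    | zero => exact Or.inl hd0
    | succ n => rw [hd_succ]; exact hφ n
  have hcoeff (n : ℕ) : coeff n ((1 - PowerSeries.X) * φ) = d (n + 1) - d n := by
    rw [sub_mul, one_mul, map_sub, hd_succ]
  obtain ⟨N, hN⟩ := eventually_atTop.mp hφ1
  have hd1 : ∀ n, N + 1 ≤ n → d n = 1 := by
    rintro (_ | n) hn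
    · omega
    · rw [hd_succ, hN n (by omega)]
  set Q := trunc (N + 1) ((1 - PowerSeries.X) * φ)
  have hQ : (Q : ℤ⟦X⟧) = (1 - PowerSeries.X) * φ := coe_trunc_of_coeff_eq_zero fun n hn => by
    rw [hcoeff, hd1 n hn, hd1 (n + 1) (by omega), sub_self]
  have hQcoeff (n : ℕ) : Q.coeff n = d (n + 1) - d n := by
    rw [← Polynomial.coeff_coe, hQ, hcoeff]
  refine ⟨Q, hQ, monic_of_coeff_eq_sub hd hd0 (eventually_atTop.mpr ⟨N + 1, hd1⟩) hQcoeff, ?_,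
    alternatingCoeffs_of_coeff_eq_sub hd hQcoeff⟩
  rw [hQcoeff, hd0, sub_zero, zero_add, hd_succ, hφ0]

namespace NumericalSemigroup

variable (S : NumericalSemigroup)

noncomputable def gapPoly : ℤ[X] := ∑ s ∈ S.finite_compl.toFinset, X ^ s

theorem H_add_gapPoly : S.H + (S.gapPoly : ℤ⟦X⟧) = PowerSeries.mk 1 := by
  ext n
  rw [map_add, Polynomial.coeff_coe, gapPoly, Polynomial.finsetSum_coeff]
  simp only [Polynomial.coeff_X_pow, H, coeff_mk, Finset.sum_ite_eq, Set.Finite.mem_toFinset]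
  by_cases hn : n ∈ S.carrier <;> simp [hn]

theorem coe_P_s18 : (S.P : ℤ⟦X⟧) = (1 - PowerSeries.X) * S.H := by
  rw [eq_sub_of_add_eq S.H_add_gapPoly, mul_sub, mul_comm _ (PowerSeries.mk 1),
    mk_one_mul_one_sub_eq_one, show S.P = 1 + (X - 1) * S.gapPoly from rfl]
  push_cast
  ring

theorem Hexp_eq_expand {w : ℕ} (hw : w ≠ 0) : S.Hexp w = PowerSeries.expand w hw S.H := by
  ext n
  rw [PowerSeries.coeff_expand]
  simp only [Hexp, H, coeff_mk]
  by_cases hdvd : w ∣ n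
  · obtain ⟨k, rfl⟩ := hdvd
    simp [Nat.mul_div_cancel_left k (Nat.pos_of_ne_zero hw), hw]
  · rw [if_neg hdvd, if_neg]
    rintro ⟨s, -, rfl⟩
    exact hdvd (dvd_mul_right w s)

theorem coe_expand_P {w : ℕ} (hw : w ≠ 0) :
    (Polynomial.expand ℤ w S.P : ℤ⟦X⟧) = (1 - PowerSeries.X ^ w) * S.Hexp w := by
  rw [Polynomial.coe_expand_eq_expand hw, coe_P_s18, map_mul, map_sub, map_one,
    PowerSeries.expand_X, Hexp_eq_expand S hw]

theorem constantCoeff_H : constantCoeff S.H = 1 := by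
  rw [H, constantCoeff_mk, if_pos S.zero_mem]

theorem eventually_coeff_H_eq_one : ∀ᶠ n in atTop, coeff n S.H = 1 := by
  rw [← Nat.cofinite_eq_atTop]
  filter_upwards [S.finite_compl.compl_mem_cofinite] with n hn
  rw [H, coeff_mk, if_pos (not_not.mp hn)]

end NumericalSemigroup

open NumericalSemigroup in
/-- If `H_S(x^w)·f(x) = H_T(x)` with `w ≥ 1` and `f` a polynomial with nonnegative
integer coefficients, then `P_S(x^w)` divides `P_T(x)` in `ℤ[x]` and the quotient
`Q = P_T / P_S(x^w)` is monic with `Q(0) = 1` and its nonzero coefficients alternate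
between `+1` and `-1`, beginning with `+1`. -/
theorem quotient_of_polynomially_related (S T : NumericalSemigroup) (w : ℕ) (hw : 1 ≤ w)
    (f : Polynomial ℤ) (hf : ∀ i, 0 ≤ f.coeff i)
    (h : S.Hexp w * (f : PowerSeries ℤ) = T.H) :
    Polynomial.expand ℤ w S.P ∣ T.P ∧
    ∃ Q : Polynomial ℤ, T.P = Polynomial.expand ℤ w S.P * Q ∧
      Q.Monic ∧ Q.coeff 0 = 1 ∧ AlternatingCoeffs Q := by
  have hw0 : w ≠ 0 := by omega
  set D := PowerSeries.expand w hw0 (PowerSeries.mk 1) * (f : ℤ⟦X⟧)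
  have hDf : (1 - PowerSeries.X ^ w) * D = (f : ℤ⟦X⟧) := by
    rw [← mul_assoc, ← PowerSeries.expand_X w hw0, ← map_one (PowerSeries.expand w hw0),
      ← map_sub, ← map_mul, mul_comm (1 - PowerSeries.X), mk_one_mul_one_sub_eq_one, map_one,
      one_mul]
  have hDT : D = T.H + ↑(Polynomial.expand ℤ w S.gapPoly * f) := by
    rw [← h, Hexp_eq_expand S hw0, Polynomial.coe_mul, Polynomial.coe_expand_eq_expand hw0,
      ← add_mul, ← map_add, H_add_gapPoly]
  have hD1 : ∀ᶠ n in atTop, coeff n D = 1 := by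
    filter_upwards [T.eventually_coeff_H_eq_one,
      eventually_gt_atTop (Polynomial.expand ℤ w S.gapPoly * f).natDegree] with n hT hdeg
    rw [hDT, map_add, hT, Polynomial.coeff_coe, coeff_eq_zero_of_natDegree_lt hdeg, add_zero]
  have hD0 : coeff 0 D = 1 := by
    have hf0 := congrArg PowerSeries.constantCoeff h
    rw [map_mul, Hexp_eq_expand S hw0, constantCoeff_expand, constantCoeff_H, one_mul,
      constantCoeff_H] at hf0
    rw [coeff_zero_eq_constantCoeff, map_mul, constantCoeff_expand, hf0, constantCoeff_mk,
      Pi.one_apply, one_mul]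
  have hD01 := coeff_eq_zero_or_one_of_one_sub_X_pow_mul_eq hw0 hDf
    (by simpa only [Polynomial.coeff_coe] using hf) hD1
  obtain ⟨Q, hQ, hmonic, hQ0, halt⟩ :=
    exists_monic_alternatingCoeffs_eq_one_sub_X_mul hD01 hD0 hD1
  have hfac : T.P = Polynomial.expand ℤ w S.P * Q := by
    rw [← Polynomial.coe_inj, Polynomial.coe_mul, coe_expand_P S hw0, hQ, coe_P_s18, ← h, ← hDf]
    ring
  exact ⟨⟨Q, hfac⟩, Q, hfac, hmonic, hQ0, halt⟩
end

section
/- Let S = a_1 S_1 +_{a_1 a_2} a_2 S_2 be a gluing of numerical semigroups S_1 and S_2. Then every element s ∈ S can be written in a unique way as s = a_1·w_1 + a_2·s_2 with w_1 ∈ Ap(S_1; a_2) and s_2 ∈ S_2; consequently H_S(x) = H_{S_2}(x^{a_2}) · Σ_{w ∈ Ap(S_1;a_2)} x^{a_1 w}, so both S_1 and S_2 are polynomially related to S via a relating polynomial with nonnegative integer coefficients. -/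
open Polynomial
open scoped Classical

/-!
Write `s₁ ∈ S₁` as `w + k a₂` with `w ∈ Ap(S₁; a₂)`; since `a₁ ∈ S₂`, the surplus `a₁ k a₂` moves
into the `S₂`-part, giving existence. Two decompositions of one element agree modulo `a₂` in
their `a₁ w` parts, so by coprimality their Apéry parts are congruent modulo `a₂`, and distinct
elements of `Ap(S₁; a₂)` are incongruent because `a₂ ∈ S₁`. The product formula for `H_S` counts
these decompositions coefficientwise, and exchanging the roles of the two semigroups gives the
relation for `S₁`.
-/

namespace NumericalSemigroup

theorem mul_mem (S : NumericalSemigroup) {a : ℕ} (ha : a ∈ S.carrier) (k : ℕ) :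
    k * a ∈ S.carrier := by
  induction k with
  | zero => simpa using S.zero_mem
  | succ k ih => rw [Nat.succ_mul]; exact S.add_mem ih ha

theorem exists_mem_Ap_add_mul (S : NumericalSemigroup) {m : ℕ} (hm : 0 < m) :
    ∀ s ∈ S.carrier, ∃ w ∈ S.Ap m, ∃ k, s = w + k * m := by
  intro s
  induction s using Nat.strong_induction_on with
  | _ s ih =>
    intro hs
    by_cases hAp : ∃ t ∈ S.carrier, t + m = s
    · obtain ⟨t, ht, rfl⟩ := hAp
      obtain ⟨w, hw, k, rfl⟩ := ih t (by omega) ht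
      exact ⟨w, hw, k + 1, by ring⟩
    · exact ⟨s, ⟨hs, fun t ht hts => hAp ⟨t, ht, hts⟩⟩, 0, by simp⟩

-- An Apéry element `s ≥ m` has `s - m` among the finitely many gaps.
theorem Ap_finite (S : NumericalSemigroup) (m : ℕ) : (S.Ap m).Finite := by
  refine ((Set.finite_Iio m).union (S.finite_compl.image (· + m))).subset ?_
  intro s ⟨_, hAp⟩
  by_cases hs : s < m
  · exact Or.inl hs
  · exact Or.inr ⟨s - m, fun h => hAp _ h (by omega), show s - m + m = s by omega⟩

theorem Ap_injOn_mod (S : NumericalSemigroup) {m : ℕ} (hm : m ∈ S.carrier) :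
    Set.InjOn (· % m) (S.Ap m) := by
  suffices h : ∀ u ∈ S.Ap m, ∀ v ∈ S.Ap m, u ≤ v → u ≡ v [MOD m] → u = v by
    intro u hu v hv huv
    rcases le_total u v with huv' | huv'
    · exact h u hu v hv huv' huv
    · exact (h v hv u hu huv' huv.symm).symm
  intro u hu v hv huv hmod
  obtain ⟨k, hk⟩ := (Nat.modEq_iff_dvd' huv).mp hmod
  rcases k with _ | k
  · omega
  · refine (hv.2 (u + k * m) (S.add_mem hu.1 (S.mul_mem hm k)) ?_).elim
    rw [Nat.mul_succ, mul_comm] at hk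
    omega

theorem eq_and_eq_of_mul_add_mul_eq (T : NumericalSemigroup) {a b : ℕ} (hb : 0 < b)
    (hcop : Nat.Coprime a b) (hbT : b ∈ T.carrier) {w w' t t' : ℕ} (hw : w ∈ T.Ap b)
    (hw' : w' ∈ T.Ap b) (h : a * w + b * t = a * w' + b * t') : w = w' ∧ t = t' := by
  have hmod : a * w ≡ a * w' [MOD b] := by
    simpa [Nat.ModEq, Nat.add_mul_mod_self_left] using congrArg (· % b) h
  obtain rfl : w = w' := T.Ap_injOn_mod hbT hw hw' (hmod.cancel_left_of_coprime hcop.symm)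
  exact ⟨rfl, Nat.eq_of_mul_eq_mul_left hb (by omega)⟩

theorem coeff_Hexp_mul_sum_X_pow (T : NumericalSemigroup) (b c : ℕ) (A : Finset ℕ) (n : ℕ) :
    PowerSeries.coeff n (T.Hexp b * ∑ w ∈ A, (PowerSeries.X : PowerSeries ℤ) ^ (c * w)) =
      (A.filter fun w => ∃ t ∈ T.carrier, n = c * w + b * t).card := by
  simp only [Finset.mul_sum, map_sum, PowerSeries.coeff_mul_X_pow', Hexp, PowerSeries.coeff_mk]
  rw [← Finset.sum_boole]
  refine Finset.sum_congr rfl fun w _ => ?_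
  by_cases hw : c * w ≤ n
  · simp only [hw, if_true]
    congr 1
    refine propext ⟨fun ⟨t, ht, h⟩ => ⟨t, ht, by omega⟩, fun ⟨t, ht, h⟩ => ⟨t, ht, by omega⟩⟩
  · simp only [hw, if_false]
    refine (if_neg ?_).symm
    rintro ⟨t, -, rfl⟩
    omega

section Gluing

variable {S₁ S₂ S : NumericalSemigroup} {a₁ a₂ : ℕ}

theorem existsUnique_gluing_decomposition (ha₂ : 0 < a₂) (hcop : Nat.Coprime a₁ a₂)
    (h₁ : a₁ ∈ S₂.carrier) (h₂ : a₂ ∈ S₁.carrier)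
    (hS : S.carrier = {n | ∃ s₁ ∈ S₁.carrier, ∃ s₂ ∈ S₂.carrier, n = a₁ * s₁ + a₂ * s₂}) :
    ∀ s ∈ S.carrier, ∃! ws : ℕ × ℕ, ws.1 ∈ S₁.Ap a₂ ∧ ws.2 ∈ S₂.carrier ∧
      s = a₁ * ws.1 + a₂ * ws.2 := by
  rw [hS]
  rintro _ ⟨s₁, hs₁, s₂, hs₂, rfl⟩
  obtain ⟨w, hw, k, rfl⟩ := S₁.exists_mem_Ap_add_mul ha₂ s₁ hs₁
  refine ⟨(w, k * a₁ + s₂), ⟨hw, S₂.add_mem (S₂.mul_mem h₁ k) hs₂, by ring⟩, ?_⟩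
  rintro ⟨w', t'⟩ ⟨hw', -, h⟩
  have h' : a₁ * w' + a₂ * t' = a₁ * w + a₂ * (k * a₁ + s₂) := by rw [← h]; ring
  obtain ⟨rfl, rfl⟩ := S₁.eq_and_eq_of_mul_add_mul_eq ha₂ hcop h₂ hw' hw h'
  rfl

theorem H_eq_Hexp_mul_sum_Ap (ha₂ : 0 < a₂) (hcop : Nat.Coprime a₁ a₂)
    (h₁ : a₁ ∈ S₂.carrier) (h₂ : a₂ ∈ S₁.carrier)
    (hS : S.carrier = {n | ∃ s₁ ∈ S₁.carrier, ∃ s₂ ∈ S₂.carrier, n = a₁ * s₁ + a₂ * s₂})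
    (hfin : (S₁.Ap a₂).Finite) :
    S.H = S₂.Hexp a₂ * ∑ w ∈ hfin.toFinset, (PowerSeries.X : PowerSeries ℤ) ^ (a₁ * w) := by
  ext n
  rw [coeff_Hexp_mul_sum_X_pow, H, PowerSeries.coeff_mk]
  split_ifs with hn
  · obtain ⟨⟨w₀, t₀⟩, ⟨hw₀, ht₀, hn₀⟩, huniq⟩ :=
      existsUnique_gluing_decomposition ha₂ hcop h₁ h₂ hS n hn
    suffices h : hfin.toFinset.filter (fun w => ∃ t ∈ S₂.carrier, n = a₁ * w + a₂ * t) = {w₀} by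
      simp [h]
    ext w
    simp only [Finset.mem_filter, Set.Finite.mem_toFinset, Finset.mem_singleton]
    refine ⟨fun ⟨hw, t, ht, h⟩ => congrArg Prod.fst (huniq (w, t) ⟨hw, ht, h⟩), ?_⟩
    rintro rfl
    exact ⟨hw₀, t₀, ht₀, hn₀⟩
  · rw [eq_comm, Nat.cast_eq_zero, Finset.card_eq_zero, Finset.filter_eq_empty_iff]
    rintro w hw ⟨t, ht, rfl⟩
    exact hn (hS ▸ ⟨w, (hfin.mem_toFinset.mp hw).1, t, ht, rfl⟩)

end Gluing

theorem exists_nonneg_poly_of_H_eq_Hexp_mul {S T : NumericalSemigroup} {b c : ℕ} {A : Finset ℕ}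
    (h : S.H = T.Hexp b * ∑ w ∈ A, (PowerSeries.X : PowerSeries ℤ) ^ (c * w)) :
    ∃ f : Polynomial ℤ, (∀ i, 0 ≤ f.coeff i) ∧ T.Hexp b * (f : PowerSeries ℤ) = S.H := by
  refine ⟨∑ w ∈ A, X ^ (c * w), fun i => ?_, ?_⟩
  · rw [finsetSum_coeff]
    exact Finset.sum_nonneg fun w _ => by rw [coeff_X_pow]; split_ifs <;> simp
  · rw [h, ← coeToPowerSeries.ringHom_apply, map_sum]
    simp [coeToPowerSeries.ringHom_apply]

end NumericalSemigroup

open NumericalSemigroup in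
/-- For a gluing `S = a₁S₁ +_{a₁a₂} a₂S₂`: every `s ∈ S` can be written in a unique way
as `s = a₁·w₁ + a₂·s₂` with `w₁ ∈ Ap(S₁; a₂)` and `s₂ ∈ S₂`; consequently
`H_S(x) = H_{S₂}(x^{a₂}) · Σ_{w ∈ Ap(S₁;a₂)} x^{a₁·w}`, so both `S₁` and `S₂` are
polynomially related to `S` via a relating polynomial with nonnegative integer
coefficients. -/
theorem gluing_unique_decomposition_and_polynomially_related
    (S₁ S₂ S : NumericalSemigroup) (a₁ a₂ : ℕ) (ha₁ : 0 < a₁) (ha₂ : 0 < a₂)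
    (hcop : Nat.Coprime a₁ a₂) (h₁ : a₁ ∈ S₂.carrier) (h₂ : a₂ ∈ S₁.carrier)
    (hS : S.carrier = {n | ∃ s₁ ∈ S₁.carrier, ∃ s₂ ∈ S₂.carrier, n = a₁ * s₁ + a₂ * s₂})
    (hfin : (S₁.Ap a₂).Finite) :
    (∀ s ∈ S.carrier, ∃! ws : ℕ × ℕ, ws.1 ∈ S₁.Ap a₂ ∧ ws.2 ∈ S₂.carrier ∧
        s = a₁ * ws.1 + a₂ * ws.2) ∧
    S.H = S₂.Hexp a₂ * ∑ w ∈ hfin.toFinset, (PowerSeries.X : PowerSeries ℤ) ^ (a₁ * w) ∧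
    (∃ f : Polynomial ℤ, (∀ i, 0 ≤ f.coeff i) ∧ S₁.Hexp a₁ * (f : PowerSeries ℤ) = S.H) ∧
    (∃ f : Polynomial ℤ, (∀ i, 0 ≤ f.coeff i) ∧ S₂.Hexp a₂ * (f : PowerSeries ℤ) = S.H) := by
  have hS' : S.carrier =
      {n | ∃ s₂ ∈ S₂.carrier, ∃ s₁ ∈ S₁.carrier, n = a₂ * s₂ + a₁ * s₁} := by
    rw [hS]
    ext
    constructor <;> rintro ⟨x, hx, y, hy, rfl⟩ <;> exact ⟨y, hy, x, hx, add_comm _ _⟩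
  have hH₂ := H_eq_Hexp_mul_sum_Ap ha₂ hcop h₁ h₂ hS hfin
  have hH₁ := H_eq_Hexp_mul_sum_Ap ha₁ hcop.symm h₂ h₁ hS' (S₂.Ap_finite a₁)
  exact ⟨existsUnique_gluing_decomposition ha₂ hcop h₁ h₂ hS, hH₂,
    exists_nonneg_poly_of_H_eq_Hexp_mul hH₁, exists_nonneg_poly_of_H_eq_Hexp_mul hH₂⟩
end
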